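/- For the non-reversible (DEO) parallel tempering index process with swap probabilities s_1,...,s_N (r_i = 1 - s_i), the expected round trip time satisfies E[T] = 2(N+1) + 2(N+1) * sum_{i=1}^N r_i/s_i. -/

import Mathlib

/-!
Write `P i`, `M i` for the expected hitting times of `(N, +1)` from `(i, +1)`, `(i, -1)`.
Starting from the reflection `M 0 = P 0 + 1`, the two recurrences propagate the invariant
`s i * (M (i - 1) - P i) = 2 i`, so `P (i - 1) - P i = 2 i r_i / s_i + 1`, and telescoping down
to `P N = 0` gives `M 0 = (N + 1) + 2 ∑ i r_i / s_i`. The time to return to `(0, -1)` from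
`(N, +1)` is the same problem with the index reversed, which replaces the weight `i` by
`N + 1 - i`; the two weights add up to `N + 1`.
-/

open Finset

theorem Finset.sum_Icc_one_sub_pred {G : Type*} [AddCommGroup G] (f : ℕ → G) (N : ℕ) :
    ∑ i ∈ Icc 1 N, (f (i - 1) - f i) = f 0 - f N := by
  rw [← Ico_add_one_right_eq_Icc, sum_Ico_eq_sum_range, add_tsub_cancel_right]
  simpa [add_comm 1] using sum_range_sub' f N

theorem Finset.sum_Icc_one_reflect {M : Type*} [AddCommMonoid M] (f : ℕ → M) (N : ℕ) :
    ∑ i ∈ Icc 1 N, f (N + 1 - i) = ∑ i ∈ Icc 1 N, f i := by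
  rw [← Ico_add_one_right_eq_Icc, sum_Ico_reflect f 1 (Nat.le_succ _)]
  simp

theorem Finset.sum_Icc_one_natCast_mul_reflect (g : ℕ → ℝ) (N : ℕ) :
    ∑ i ∈ Icc 1 N, (i : ℝ) * g (N + 1 - i) =
      ∑ i ∈ Icc 1 N, ((N : ℝ) + 1 - i) * g i := by
  rw [← sum_Icc_one_reflect (fun i => ((N : ℝ) + 1 - i) * g i)]
  refine sum_congr rfl fun i hi => ?_
  rw [Nat.cast_sub (by simp at hi; omega)]
  push_cast
  ring

namespace DEO

variable {N : ℕ} {s P M : ℕ → ℝ}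

theorem swap_mul_sub_eq_two_mul
    (hP : ∀ i < N, P i = s (i+1) * (P (i+1) + 1) + (1 - s (i+1)) * (M i + 1))
    (hM : ∀ i, 1 ≤ i → i ≤ N → M i = s i * (M (i-1) + 1) + (1 - s i) * (P i + 1))
    (hRefl : M 0 = P 0 + 1) {i : ℕ} (hi : 1 ≤ i) (hiN : i ≤ N) :
    s i * (M (i - 1) - P i) = 2 * i := by
  induction i, hi using Nat.le_induction with
  | base => linear_combination hRefl + hP 0 hiN
  | succ i hi ih =>
    simp only [Nat.add_sub_cancel]
    push_cast
    linear_combination hM i hi (by omega) + hP i (by omega) + ih (by omega)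

theorem pred_sub_eq
    (hs : ∀ i, 1 ≤ i → i ≤ N → s i ≠ 0)
    (hP : ∀ i < N, P i = s (i+1) * (P (i+1) + 1) + (1 - s (i+1)) * (M i + 1))
    (hM : ∀ i, 1 ≤ i → i ≤ N → M i = s i * (M (i-1) + 1) + (1 - s i) * (P i + 1))
    (hRefl : M 0 = P 0 + 1) {i : ℕ} (hi : 1 ≤ i) (hiN : i ≤ N) :
    P (i - 1) - P i = 2 * i * ((1 - s i) / s i) + 1 := by
  have hgap : M (i - 1) - P i = 2 * i / s i :=
    eq_div_of_mul_eq (hs i hi hiN) <| by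
      linear_combination swap_mul_sub_eq_two_mul hP hM hRefl hi hiN
  have hstep := hP (i - 1) (by omega)
  rw [Nat.sub_add_cancel hi] at hstep
  calc P (i - 1) - P i = (1 - s i) * (M (i - 1) - P i) + 1 := by linear_combination hstep
    _ = 2 * i * ((1 - s i) / s i) + 1 := by rw [hgap]; ring

theorem up_hitting_time
    (hs : ∀ i, 1 ≤ i → i ≤ N → s i ≠ 0)
    (hP : ∀ i < N, P i = s (i+1) * (P (i+1) + 1) + (1 - s (i+1)) * (M i + 1))
    (hM : ∀ i, 1 ≤ i → i ≤ N → M i = s i * (M (i-1) + 1) + (1 - s i) * (P i + 1))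
    (hRefl : M 0 = P 0 + 1) (hTarget : P N = 0) :
    M 0 = (N + 1) + 2 * ∑ i ∈ Icc 1 N, (i : ℝ) * ((1 - s i) / s i) := by
  have htele : P 0 = ∑ i ∈ Icc 1 N, (2 * i * ((1 - s i) / s i) + 1) := by
    rw [← sub_zero (P 0), ← hTarget, ← sum_Icc_one_sub_pred]
    exact sum_congr rfl fun i hi => by
      simp only [mem_Icc] at hi
      exact pred_sub_eq hs hP hM hRefl hi.1 hi.2
  rw [hRefl, htele, sum_add_distrib, mul_sum]
  simp only [sum_const, Nat.card_Icc, add_tsub_cancel_right, nsmul_eq_mul, mul_one, mul_assoc]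
  ring

/-- Reversing the index, `i ↦ N - i`, and the direction turns this into an up problem with
swap probabilities `s (N + 1 - i)`. -/
theorem down_hitting_time
    (hs : ∀ i, 1 ≤ i → i ≤ N → s i ≠ 0)
    (hP : ∀ i < N, P i = s (i+1) * (P (i+1) + 1) + (1 - s (i+1)) * (M i + 1))
    (hM : ∀ i, 1 ≤ i → i ≤ N → M i = s i * (M (i-1) + 1) + (1 - s i) * (P i + 1))
    (hRefl : P N = M N + 1) (hTarget : M 0 = 0) :
    P N = (N + 1) + 2 * ∑ i ∈ Icc 1 N, ((N : ℝ) + 1 - i) * ((1 - s i) / s i) := by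
  have hmirror := up_hitting_time (N := N) (s := fun i => s (N + 1 - i))
    (P := fun i => M (N - i)) (M := fun i => P (N - i))
    (fun i h1 h2 => hs (N + 1 - i) (by omega) (by omega))
    (fun i hi => by
      simp only [show N + 1 - (i + 1) = N - i by omega, show N - (i + 1) = N - i - 1 by omega]
      exact hM (N - i) (by omega) (by omega))
    (fun i h1 h2 => by
      simp only [show N - (i - 1) = N - i + 1 by omega, show N + 1 - i = N - i + 1 by omega]
      exact hP (N - i) (by omega))
    (by simpa using hRefl) (by simpa using hTarget)
  simpa [sum_Icc_one_natCast_mul_reflect (fun i => (1 - s i) / s i)] using hmirror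

end DEO

/-- `aUpP i`, `aUpM i` are the expected hitting times of `(N, +1)` from `(i, +1)`, `(i, -1)`,
and `aDownP i`, `aDownM i` those of `(0, -1)`; thus `E[T] = aUpM 0 + aDownP N`. -/
theorem deo_round_trip_general (N : ℕ) (s : ℕ → ℝ)
    (hs : ∀ i, 1 ≤ i → i ≤ N → 0 < s i ∧ s i ≤ 1)
    (aUpP aUpM aDownP aDownM : ℕ → ℝ)
    (hUpP : ∀ i, i ≤ N - 1 →
      aUpP i = s (i+1) * (aUpP (i+1) + 1) + (1 - s (i+1)) * (aUpM i + 1))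
    (hUpM : ∀ i, 1 ≤ i → i ≤ N →
      aUpM i = s i * (aUpM (i-1) + 1) + (1 - s i) * (aUpP i + 1))
    (hUpRefl : aUpM 0 = aUpP 0 + 1)
    (hUpTarget : aUpP N = 0)
    (hDownP : ∀ i, i ≤ N - 1 →
      aDownP i = s (i+1) * (aDownP (i+1) + 1) + (1 - s (i+1)) * (aDownM i + 1))
    (hDownM : ∀ i, 1 ≤ i → i ≤ N →
      aDownM i = s i * (aDownM (i-1) + 1) + (1 - s i) * (aDownP i + 1))
    (hDownRefl : aDownP N = aDownM N + 1)
    (hDownTarget : aDownM 0 = 0) :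
    aUpM 0 + aDownP N
      = 2 * (N + 1) + 2 * (N + 1) * ∑ i ∈ Finset.Icc 1 N, (1 - s i) / s i := by
  have hs₀ : ∀ i, 1 ≤ i → i ≤ N → s i ≠ 0 := fun i h1 h2 => (hs i h1 h2).1.ne'
  have hsplit : ((N : ℝ) + 1) * ∑ i ∈ Icc 1 N, (1 - s i) / s i
      = ∑ i ∈ Icc 1 N, (i : ℝ) * ((1 - s i) / s i)
        + ∑ i ∈ Icc 1 N, ((N : ℝ) + 1 - i) * ((1 - s i) / s i) := by
    rw [mul_sum, ← sum_add_distrib]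
    exact sum_congr rfl fun i _ => by ring
  rw [DEO.up_hitting_time hs₀ (fun i hi => hUpP i (by omega)) hUpM hUpRefl hUpTarget,
    DEO.down_hitting_time hs₀ (fun i hi => hDownP i (by omega)) hDownM hDownRefl hDownTarget,
    mul_assoc, hsplit]
  ring

/-- Expected round trip time for the non-reversible (DEO) parallel tempering index
process: with swap probabilities `s 1, …, s N` (and `r i = 1 - s i`), if
`aUpP i, aUpM i` denote the expected hitting times of the state `(N, +1)` from
`(i, +1)` resp. `(i, -1)`, and `aDownP i, aDownM i` the expected hitting times of
`(0, -1)`, under the DEO dynamics (moving in the current direction with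
probability `s`, flipping the direction on rejection, and reflecting at the
boundaries), then `E[T] = aUpM 0 + aDownP N = 2(N+1) + 2(N+1) ∑ r_i / s_i`. -/
theorem deo_round_trip (N : ℕ) (hN : 1 ≤ N) (s : ℕ → ℝ)
    (hs : ∀ i, 1 ≤ i → i ≤ N → 0 < s i ∧ s i ≤ 1)
    (aUpP aUpM aDownP aDownM : ℕ → ℝ)
    (hUpP : ∀ i, i ≤ N - 1 →
      aUpP i = s (i+1) * (aUpP (i+1) + 1) + (1 - s (i+1)) * (aUpM i + 1))
    (hUpM : ∀ i, 1 ≤ i → i ≤ N →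
      aUpM i = s i * (aUpM (i-1) + 1) + (1 - s i) * (aUpP i + 1))
    (hUpRefl : aUpM 0 = aUpP 0 + 1)
    (hUpTarget : aUpP N = 0)
    (hDownP : ∀ i, i ≤ N - 1 →
      aDownP i = s (i+1) * (aDownP (i+1) + 1) + (1 - s (i+1)) * (aDownM i + 1))
    (hDownM : ∀ i, 1 ≤ i → i ≤ N →
      aDownM i = s i * (aDownM (i-1) + 1) + (1 - s i) * (aDownP i + 1))
    (hDownRefl : aDownP N = aDownM N + 1)
    (hDownTarget : aDownM 0 = 0) :
    aUpM 0 + aDownP N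
      = 2 * (N + 1) + 2 * (N + 1) * ∑ i ∈ Finset.Icc 1 N, (1 - s i) / s i :=
  deo_round_trip_general N s hs aUpP aUpM aDownP aDownM hUpP hUpM hUpRefl hUpTarget hDownP hDownM
    hDownRefl hDownTarget
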